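/- If f : [0,1] → ℝ is convex, then for all n ≥ 1, 0 < q < p ≤ 1, α = β = 0, and x ∈ [0,1], the (p,q)-Bernstein-Stancu operator dominates f: S_{n,p,q}(f; x) ≥ f(x). -/
import Mathlib

open Finset

noncomputable def pqInt (p q : ℝ) (m : ℕ) : ℝ :=
  ∑ i ∈ Finset.range m, p ^ (m - 1 - i) * q ^ i

noncomputable def pqFact (p q : ℝ) (n : ℕ) : ℝ :=
  ∏ j ∈ Finset.range n, pqInt p q (j + 1)

noncomputable def pqChoose (p q : ℝ) (n k : ℕ) : ℝ :=
  pqFact p q n / (pqFact p q k * pqFact p q (n - k))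

noncomputable def pqBasis (p q : ℝ) (n k : ℕ) (x : ℝ) : ℝ :=
  pqChoose p q n k * (p ^ (k * (k - 1) / 2) / p ^ (n * (n - 1) / 2)) * x ^ k *
    ∏ s ∈ Finset.range (n - k), (p ^ s - q ^ s * x)

noncomputable def pqNode (p q α β : ℝ) (n k : ℕ) : ℝ :=
  (p ^ (n - k) * pqInt p q k + α) / (pqInt p q n + β)

noncomputable def pqStancu (p q α β : ℝ) (n : ℕ) (f : ℝ → ℝ) (x : ℝ) : ℝ :=
  ∑ k ∈ Finset.range (n + 1), pqBasis p q n k x * f (pqNode p q α β n k)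

lemma pqInt_add (p q : ℝ) (a b : ℕ) :
    pqInt p q (a + b) = p ^ b * pqInt p q a + q ^ a * pqInt p q b := by
  unfold pqInt
  rw [Finset.sum_range_add, Finset.mul_sum, Finset.mul_sum]
  congr 1
  · refine Finset.sum_congr rfl fun i hi => ?_
    rw [Finset.mem_range] at hi
    have h1 : a + b - 1 - i = (a - 1 - i) + b := by omega
    rw [h1, pow_add]; ring
  · refine Finset.sum_congr rfl fun i hi => ?_
    rw [Finset.mem_range] at hi
    have h1 : a + b - 1 - (a + i) = b - 1 - i := by omega
    rw [h1, pow_add]; ring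

lemma pqInt_pos {p q : ℝ} (hq : 0 < q) (hp : 0 < p) {m : ℕ} (hm : 1 ≤ m) :
    0 < pqInt p q m := by
  unfold pqInt
  apply Finset.sum_pos (fun i hi => by positivity)
  exact Finset.nonempty_range_iff.mpr (by omega)

lemma pqInt_nonneg {p q : ℝ} (hq : 0 < q) (hp : 0 < p) (m : ℕ) :
    0 ≤ pqInt p q m :=
  Finset.sum_nonneg fun i _ => by positivity

lemma pqFact_pos {p q : ℝ} (hq : 0 < q) (hp : 0 < p) (n : ℕ) :
    0 < pqFact p q n :=
  Finset.prod_pos fun j _ => pqInt_pos hq hp (by omega)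

lemma pqFact_succ (p q : ℝ) (n : ℕ) :
    pqFact p q (n + 1) = pqFact p q n * pqInt p q (n + 1) := by
  unfold pqFact; rw [Finset.prod_range_succ]

lemma pqFact_zero (p q : ℝ) : pqFact p q 0 = 1 := by
  unfold pqFact; simp

lemma pqChoose_pascal {p q : ℝ} (hq : 0 < q) (hp : 0 < p) {n k : ℕ} (hk : k < n) :
    pqChoose p q (n + 1) (k + 1)
      = p ^ (k + 1) * pqChoose p q n (k + 1) + q ^ (n - k) * pqChoose p q n k := by
  have key : pqInt p q (n + 1)
      = p ^ (k + 1) * pqInt p q (n - k) + q ^ (n - k) * pqInt p q (k + 1) := by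
    have h := pqInt_add p q (n - k) (k + 1)
    rw [show n - k + (k + 1) = n + 1 by omega] at h
    exact h
  unfold pqChoose
  rw [show n + 1 - (k + 1) = n - k by omega,
      show n - (k + 1) = (n - k) - 1 by omega,
      pqFact_succ, pqFact_succ p q k,
      show n - k = ((n - k) - 1) + 1 by omega, pqFact_succ,
      show (n - k - 1) + 1 = n - k by omega, key]
  have h1 := (pqFact_pos hq hp n).ne'
  have h2 := (pqFact_pos hq hp k).ne'
  have h3 := (pqFact_pos hq hp (n - k - 1)).ne'
  have h4 := (pqInt_pos hq hp (m := k + 1) (by omega)).ne'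
  have h5 := (pqInt_pos hq hp (m := n - k) (by omega)).ne'
  field_simp

lemma pqChoose_mul_pqInt {p q : ℝ} (hq : 0 < q) (hp : 0 < p) {n k : ℕ} (hk : k ≤ n) :
    pqChoose p q (n + 1) (k + 1) * pqInt p q (k + 1)
      = pqInt p q (n + 1) * pqChoose p q n k := by
  unfold pqChoose
  rw [show n + 1 - (k + 1) = n - k by omega, pqFact_succ, pqFact_succ p q k]
  have h1 := (pqFact_pos hq hp n).ne'
  have h2 := (pqFact_pos hq hp k).ne'
  have h3 := (pqFact_pos hq hp (n - k)).ne'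
  have h4 := (pqInt_pos hq hp (m := k + 1) (by omega)).ne'
  field_simp

noncomputable def pqProd (p q x : ℝ) (m : ℕ) : ℝ := ∏ s ∈ Finset.range m, (p ^ s - q ^ s * x)

lemma pqProd_succ (p q x : ℝ) (m : ℕ) :
    pqProd p q x (m + 1) = pqProd p q x m * (p ^ m - q ^ m * x) := by
  unfold pqProd; rw [Finset.prod_range_succ]

lemma tri (k : ℕ) : (k + 1) * k / 2 = k * (k - 1) / 2 + k := by
  cases k with
  | zero => rfl
  | succ m =>
    have h : (m + 1 + 1) * (m + 1) = (m + 1) * m + 2 * (m + 1) := by ring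
    have h2 : (m + 1) * (m + 1 - 1) = (m + 1) * m := rfl
    rw [h2, h, Nat.add_mul_div_left _ _ (by norm_num : (0:ℕ) < 2)]

lemma pqChoose_zero {p q : ℝ} (hq : 0 < q) (hp : 0 < p) (n : ℕ) :
    pqChoose p q n 0 = 1 := by
  unfold pqChoose
  rw [pqFact_zero, Nat.sub_zero, one_mul, div_self (pqFact_pos hq hp n).ne']

lemma pqChoose_self {p q : ℝ} (hq : 0 < q) (hp : 0 < p) (n : ℕ) :
    pqChoose p q n n = 1 := by
  unfold pqChoose
  rw [Nat.sub_self, pqFact_zero, mul_one, div_self (pqFact_pos hq hp n).ne']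

lemma pqInt_zero (p q : ℝ) : pqInt p q 0 = 0 := by unfold pqInt; simp

lemma sum_basis_raw {p q : ℝ} (hq : 0 < q) (hp : 0 < p) (x : ℝ) : ∀ n : ℕ,
    ∑ k ∈ Finset.range (n + 1),
      pqChoose p q n k * p ^ (k * (k - 1) / 2) * x ^ k * pqProd p q x (n - k)
      = p ^ (n * (n - 1) / 2) := by
  intro n
  induction n with
  | zero => simp [pqChoose_self hq hp, pqProd]
  | succ n ih =>
    set f : ℕ → ℝ := fun k =>
      pqChoose p q (n + 1) k * p ^ (k * (k - 1) / 2) * x ^ k * pqProd p q x (n + 1 - k) with hf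
    set A : ℕ → ℝ := fun k =>
      p ^ k * pqChoose p q n k * p ^ (k * (k - 1) / 2) * x ^ k * pqProd p q x (n + 1 - k) with hA
    set B : ℕ → ℝ := fun k =>
      q ^ (n - k) * pqChoose p q n k * p ^ (k * (k - 1) / 2) * p ^ k * x ^ (k + 1) *
        pqProd p q x (n - k) with hB
    have h0 : f 0 = A 0 := by
      simp only [hf, hA, pqChoose_zero hq hp, pow_zero, one_mul]
    have htop : f (n + 1) = B n := by
      simp only [hf, hB, pqChoose_self hq hp, Nat.sub_self, pow_zero, one_mul, tri (n + 1)]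
      rw [show (n+1) * (n+1-1) / 2 = (n+1) * n / 2 from rfl, tri n, pow_add]
    have hmid : ∀ k ∈ Finset.range n, f (k + 1) = A (k + 1) + B k := by
      intro k hk
      rw [Finset.mem_range] at hk
      simp only [hf, hA, hB]
      rw [pqChoose_pascal hq hp hk, show (k+1) * ((k+1)-1) / 2 = (k+1) * k / 2 from rfl,
        tri k, pow_add, show n + 1 - (k + 1) = n - k by omega]
      ring
    have key : ∀ k ∈ Finset.range (n + 1), A k + B k
        = p ^ n * (pqChoose p q n k * p ^ (k * (k - 1) / 2) * x ^ k * pqProd p q x (n - k)) := by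
      intro k hk
      rw [Finset.mem_range] at hk
      simp only [hA, hB]
      rw [show n + 1 - k = (n - k) + 1 by omega, pqProd_succ]
      have hpk : (p:ℝ) ^ k * p ^ (n - k) = p ^ n := by
        rw [← pow_add]; congr 1; omega
      linear_combination (pqChoose p q n k * p ^ (k * (k - 1) / 2) * x ^ k *
        pqProd p q x (n - k)) * hpk
    have split : ∑ k ∈ Finset.range (n + 1 + 1), f k
        = ∑ k ∈ Finset.range (n + 1), A k + ∑ k ∈ Finset.range (n + 1), B k := by
      rw [Finset.sum_range_succ' f (n + 1), Finset.sum_range_succ (fun k => f (k + 1)) n,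
        Finset.sum_range_succ' A n, Finset.sum_range_succ B n,
        Finset.sum_congr rfl hmid, Finset.sum_add_distrib, h0, htop]
      ring
    calc ∑ k ∈ Finset.range (n + 1 + 1), f k
        = ∑ k ∈ Finset.range (n + 1), (A k + B k) := by
          rw [split, Finset.sum_add_distrib]
      _ = p ^ n * ∑ k ∈ Finset.range (n + 1),
            (pqChoose p q n k * p ^ (k * (k - 1) / 2) * x ^ k * pqProd p q x (n - k)) := by
          rw [Finset.sum_congr rfl key, ← Finset.mul_sum]
      _ = p ^ ((n + 1) * n / 2) := by
          rw [ih, tri n, pow_add]; ring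

lemma sum_moment_raw {p q : ℝ} (hq : 0 < q) (hp : 0 < p) (x : ℝ) (n : ℕ) :
    ∑ k ∈ Finset.range (n + 1 + 1),
      pqChoose p q (n + 1) k * p ^ (k * (k - 1) / 2) * x ^ k * pqProd p q x (n + 1 - k) *
        (p ^ (n + 1 - k) * pqInt p q k)
      = p ^ ((n + 1) * n / 2) * pqInt p q (n + 1) * x := by
  set g : ℕ → ℝ := fun k =>
    pqChoose p q (n + 1) k * p ^ (k * (k - 1) / 2) * x ^ k * pqProd p q x (n + 1 - k) *
      (p ^ (n + 1 - k) * pqInt p q k) with hg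
  have hg0 : g 0 = 0 := by simp [hg, pqInt_zero]
  have hstep : ∀ k ∈ Finset.range (n + 1), g (k + 1)
      = (pqInt p q (n + 1) * x * p ^ n) *
        (pqChoose p q n k * p ^ (k * (k - 1) / 2) * x ^ k * pqProd p q x (n - k)) := by
    intro k hk
    rw [Finset.mem_range] at hk
    have hkn : k ≤ n := by omega
    have h := pqChoose_mul_pqInt hq hp hkn
    simp only [hg]
    rw [show n + 1 - (k + 1) = n - k by omega,
      show (k+1) * ((k+1)-1) / 2 = (k+1) * k / 2 from rfl, tri k, pow_add]
    have hpk : (p:ℝ) ^ k * p ^ (n - k) = p ^ n := by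
      rw [← pow_add]; congr 1; omega
    rw [← hpk]
    linear_combination (p ^ (k * (k - 1) / 2) * p ^ k * x ^ (k + 1) * pqProd p q x (n - k) *
      p ^ (n - k)) * h
  rw [Finset.sum_range_succ' g (n + 1), hg0, add_zero, Finset.sum_congr rfl hstep,
    ← Finset.mul_sum, sum_basis_raw hq hp x n, tri n, pow_add]
  ring

theorem pqStancu_ge_of_convex (f : ℝ → ℝ) (hf : ConvexOn ℝ (Set.Icc (0 : ℝ) 1) f)
    (p q x : ℝ) (hq : 0 < q) (hqp : q < p) (hp : p ≤ 1) (n : ℕ) (hn : 1 ≤ n)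
    (hx : x ∈ Set.Icc (0 : ℝ) 1) :
    f x ≤ pqStancu p q 0 0 n f x := by
  have hp0 : 0 < p := hq.trans hqp
  obtain ⟨hx0, hx1⟩ := hx
  set w : ℕ → ℝ := fun k => pqBasis p q n k x with hw
  set z : ℕ → ℝ := fun k => pqNode p q 0 0 n k with hz
  have hbw : ∀ k, w k = (pqChoose p q n k * p ^ (k * (k - 1) / 2) * x ^ k *
      pqProd p q x (n - k)) / p ^ (n * (n - 1) / 2) := by
    intro k
    simp only [hw, pqBasis, pqProd]
    ring
  -- weights sum to one
  have hsum1 : ∑ k ∈ Finset.range (n + 1), w k = 1 := by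
    simp only [hbw]
    rw [← Finset.sum_div, sum_basis_raw hq hp0 x n,
      div_self (pow_ne_zero _ hp0.ne')]
  -- weights are nonnegative
  have hwnn : ∀ k ∈ Finset.range (n + 1), 0 ≤ w k := by
    intro k _
    rw [hbw]
    apply div_nonneg _ (by positivity)
    have hch : 0 ≤ pqChoose p q n k :=
      le_of_lt (div_pos (pqFact_pos hq hp0 n)
        (mul_pos (pqFact_pos hq hp0 k) (pqFact_pos hq hp0 (n - k))))
    have hprod : 0 ≤ pqProd p q x (n - k) := by
      apply Finset.prod_nonneg
      intro s _
      have h1 : q ^ s * x ≤ q ^ s := by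
        nlinarith [pow_pos hq s]
      have h2 : q ^ s ≤ p ^ s := pow_le_pow_left₀ hq.le hqp.le s
      linarith
    positivity
  -- nodes lie in [0,1]
  have hIn : 0 < pqInt p q n := pqInt_pos hq hp0 hn
  have hzmem : ∀ k ∈ Finset.range (n + 1), z k ∈ Set.Icc (0 : ℝ) 1 := by
    intro k hk
    rw [Finset.mem_range] at hk
    have hkn : k ≤ n := by omega
    simp only [hz, pqNode, add_zero]
    constructor
    · exact div_nonneg (mul_nonneg (pow_nonneg hp0.le _) (pqInt_nonneg hq hp0 k)) hIn.le
    · rw [div_le_one hIn]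
      have h := pqInt_add p q k (n - k)
      rw [show k + (n - k) = n by omega] at h
      nlinarith [pqInt_nonneg hq hp0 (n - k), pow_pos hq k]
  -- first moment
  have hmom : ∑ k ∈ Finset.range (n + 1), w k • z k = x := by
    obtain ⟨m, rfl⟩ : ∃ m, n = m + 1 := ⟨n - 1, by omega⟩
    have hstep : ∀ k ∈ Finset.range (m + 1 + 1), w k • z k
        = (pqChoose p q (m + 1) k * p ^ (k * (k - 1) / 2) * x ^ k * pqProd p q x (m + 1 - k) *
          (p ^ (m + 1 - k) * pqInt p q k)) / (p ^ ((m + 1) * m / 2) * pqInt p q (m + 1)) := by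
      intro k _
      rw [smul_eq_mul, hbw]
      simp only [hz, pqNode, add_zero]
      rw [show (m + 1) * ((m + 1) - 1) / 2 = (m + 1) * m / 2 from rfl]
      field_simp
    rw [Finset.sum_congr rfl hstep, ← Finset.sum_div, sum_moment_raw hq hp0 x m]
    rw [mul_comm (p ^ ((m + 1) * m / 2) * pqInt p q (m + 1)) x, mul_div_assoc,
      div_self (by positivity), mul_one]
  have jensen := hf.map_sum_le hwnn hsum1 hzmem
  rw [hmom] at jensen
  calc f x ≤ ∑ k ∈ Finset.range (n + 1), w k • f (z k) := jensen
    _ = pqStancu p q 0 0 n f x := by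
        simp only [smul_eq_mul, pqStancu, hw, hz]
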